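/- arXiv:1006.2938 — 12 statements merged into one kernel-verified Lean document; each statement's English description precedes it below -/
import Mathlib

section
/- The subgroup SO₂(ℚ) of rotation matrices with rational entries is dense in the special orthogonal group SO₂(ℝ). -/
/-- `SO₂(ℝ)`: real 2×2 matrices of the form `[[a, b], [-b, a]]` with `a² + b² = 1`. -/
def SO2R : Set (Matrix (Fin 2) (Fin 2) ℝ) :=
  {A | A 1 1 = A 0 0 ∧ A 1 0 = -A 0 1 ∧ (A 0 0) ^ 2 + (A 0 1) ^ 2 = 1}

/-!
Every point of the unit circle other than `(-1, 0)` is `((1 - t²)/(1 + t²), 2t/(1 + t²))` for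
`t = b/(1 + a)`, and this parametrization is continuous and sends rational `t` to rational points.
As `ℚ` is dense in `ℝ`, the rational rotations are dense in `SO₂(ℝ) \ {-1}`, and `-1` is rational.
-/

open Set

def rotMatrix {R : Type*} [Neg R] (a b : R) : Matrix (Fin 2) (Fin 2) R := !![a, b; -b, a]

lemma map_rotMatrix {R S F : Type*} [AddGroup R] [AddGroup S] [FunLike F R S]
    [AddMonoidHomClass F R S] (f : F) (a b : R) :
    (rotMatrix a b).map f = rotMatrix (f a) (f b) := by
  ext i j
  fin_cases i <;> fin_cases j <;> simp [rotMatrix]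

lemma rotMatrix_mem_SO2R {a b : ℝ} (h : a ^ 2 + b ^ 2 = 1) : rotMatrix a b ∈ SO2R := by
  simp [SO2R, rotMatrix, h]

lemma eq_rotMatrix_of_mem_SO2R {A : Matrix (Fin 2) (Fin 2) ℝ} (hA : A ∈ SO2R) :
    A = rotMatrix (A 0 0) (A 0 1) := by
  obtain ⟨h11, h10, -⟩ := hA
  ext i j
  fin_cases i <;> fin_cases j <;> simp [rotMatrix, h11, h10]

/-- The rotation by the angle `2 arctan t`. -/
def cayleyRot {K : Type*} [Field K] (t : K) : Matrix (Fin 2) (Fin 2) K :=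
  rotMatrix ((1 - t ^ 2) / (1 + t ^ 2)) (2 * t / (1 + t ^ 2))

lemma map_cayleyRot {K L : Type*} [Field K] [Field L] (f : K →+* L) (t : K) :
    (cayleyRot t).map f = cayleyRot (f t) := by
  simp [cayleyRot, map_rotMatrix, map_ofNat]

lemma cayleyRot_mem_SO2R (t : ℝ) : cayleyRot t ∈ SO2R := by
  apply rotMatrix_mem_SO2R
  field_simp
  ring

lemma continuous_cayleyRot : Continuous (cayleyRot : ℝ → Matrix (Fin 2) (Fin 2) ℝ) := by
  have hden : ∀ t : ℝ, 1 + t ^ 2 ≠ 0 := fun t => by positivity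
  refine continuous_pi fun i => continuous_pi fun j => ?_
  fin_cases i <;> fin_cases j <;> simp [cayleyRot, rotMatrix] <;> fun_prop (disch := exact hden _)

lemma cayleyRot_div_one_add {a b : ℝ} (h : a ^ 2 + b ^ 2 = 1) (ha : a ≠ -1) :
    cayleyRot (b / (1 + a)) = rotMatrix a b := by
  have h1a : 1 + a ≠ 0 := fun h' => ha (by linarith)
  unfold cayleyRot
  congr 1
  · field_simp
    linear_combination -(1 + a) * h
  · field_simp
    linear_combination -b * h

lemma eq_rotMatrix_neg_one_zero {a b : ℝ} (h : a ^ 2 + b ^ 2 = 1) (ha : a = -1) :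
    rotMatrix a b = rotMatrix (-1) 0 := by
  have hb : b = 0 := by subst ha; nlinarith
  rw [ha, hb]

noncomputable def cayleySO2R (t : ℝ) : SO2R := ⟨cayleyRot t, cayleyRot_mem_SO2R t⟩

lemma continuous_cayleySO2R : Continuous cayleySO2R :=
  continuous_cayleyRot.subtype_mk _

/-- `SO₂(ℚ)`, viewed inside `SO₂(ℝ)`: those matrices of `SO₂(ℝ)` all of whose
entries are rational. It is dense in `SO₂(ℝ)` (with the topology induced from
the space of real 2×2 matrices). -/
theorem SO2Q_dense_in_SO2R :
    Dense {A : SO2R | ∀ i j : Fin 2, ∃ q : ℚ, (A : Matrix (Fin 2) (Fin 2) ℝ) i j = (q : ℝ)} := by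
  set S := {A : SO2R | ∀ i j : Fin 2, ∃ q : ℚ, (A : Matrix (Fin 2) (Fin 2) ℝ) i j = (q : ℝ)}
  have mem_S_of_eq_map {A : Matrix (Fin 2) (Fin 2) ℝ} (hA : A ∈ SO2R)
      (B : Matrix (Fin 2) (Fin 2) ℚ) (hAB : A = B.map (Rat.castHom ℝ)) : ⟨A, hA⟩ ∈ S :=
    fun i j => ⟨B i j, congrFun₂ hAB i j⟩
  have cayley_rat_mem_S : cayleySO2R '' range ((↑) : ℚ → ℝ) ⊆ S := by
    rintro _ ⟨_, ⟨q, rfl⟩, rfl⟩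
    exact mem_S_of_eq_map _ (cayleyRot q) (by rw [map_cayleyRot]; rfl)
  rintro ⟨A, hA⟩
  have hA_rot := eq_rotMatrix_of_mem_SO2R hA
  by_cases ha : A 0 0 = -1
  · refine subset_closure (mem_S_of_eq_map _ (rotMatrix (-1) 0) ?_)
    rw [map_rotMatrix, hA_rot, eq_rotMatrix_neg_one_zero hA.2.2 ha]
    simp
  · have hA_range : ⟨A, hA⟩ ∈ range cayleySO2R :=
      ⟨_, Subtype.ext ((cayleyRot_div_one_add hA.2.2 ha).trans hA_rot.symm)⟩
    exact closure_mono cayley_rat_mem_S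
      (continuous_cayleySO2R.range_subset_closure_image_dense Rat.denseRange_cast hA_range)
end

section
/- The real number (arccos(3/5))/π is irrational. -/
open Real

def aSeq : ℕ → ℤ
  | 0 => 1
  | 1 => 3
  | n + 2 => 6 * aSeq (n + 1) - 25 * aSeq n

lemma aSeq_rec (n : ℕ) : aSeq (n + 2) = 6 * aSeq (n + 1) - 25 * aSeq n := rfl

lemma aSeq_not_dvd : ∀ n, ¬ (5 ∣ aSeq (n + 1)) := by
  have key : ∀ n, ¬ (5 ∣ aSeq (n + 1)) ∧ ¬ (5 ∣ aSeq (n + 1 + 1)) := by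
    intro n
    induction n with
    | zero =>
      constructor <;> · show ¬ _; decide
    | succ k ih =>
      obtain ⟨h1, h2⟩ := ih
      refine ⟨h2, ?_⟩
      have h : aSeq (k + 1 + 1 + 1) = 6 * aSeq (k + 1 + 1) - 25 * aSeq (k + 1) := rfl
      omega
  exact fun n => (key n).1

lemma cos_mul_eq (θ : ℝ) (h : Real.cos θ = 3 / 5) :
    ∀ n : ℕ, Real.cos (n * θ) = aSeq n / 5 ^ n := by
  set P : ℕ → Prop := fun n => Real.cos (n * θ) = aSeq n / 5 ^ n with hP
  have key : ∀ n, P n ∧ P (n + 1) := by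
    intro n
    induction n with
    | zero => constructor <;> simp [hP, aSeq, h]
    | succ k ih =>
      obtain ⟨h1, h2⟩ := ih
      refine ⟨h2, ?_⟩
      simp only [hP] at h1 h2 ⊢
      have e1 : ((k + 1 + 1 : ℕ) : ℝ) * θ = ((k + 1 : ℕ) : ℝ) * θ + θ := by
        push_cast; ring
      have e2 : ((k : ℕ) : ℝ) * θ = ((k + 1 : ℕ) : ℝ) * θ - θ := by
        push_cast; ring
      have hsum : Real.cos (((k + 1 + 1 : ℕ) : ℝ) * θ) + Real.cos (((k : ℕ) : ℝ) * θ)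
          = 2 * Real.cos (((k + 1 : ℕ) : ℝ) * θ) * Real.cos θ := by
        rw [e1, e2, Real.cos_add, Real.cos_sub]; ring
      rw [h1, h2, h] at hsum
      have ha : aSeq (k + 1 + 1) = 6 * aSeq (k + 1) - 25 * aSeq k := rfl
      rw [ha]
      have hX : Real.cos (((k + 1 + 1 : ℕ) : ℝ) * θ)
          = 2 * ((aSeq (k + 1) : ℝ) / 5 ^ (k + 1)) * (3 / 5) - (aSeq k : ℝ) / 5 ^ k := by
        linarith
      rw [hX]
      have h5 : (5 : ℝ) ^ k ≠ 0 := by positivity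
      push_cast
      field_simp
      ring
  exact fun n => (key n).1

theorem arccos_three_fifths_div_pi_irrational :
    Irrational (Real.arccos (3 / 5) / Real.pi) := by
  set θ := Real.arccos (3 / 5) with hθ
  have hcos : Real.cos θ = 3 / 5 := Real.cos_arccos (by norm_num) (by norm_num)
  rw [Irrational]
  rintro ⟨r, hr⟩
  have hpi : Real.pi ≠ 0 := Real.pi_ne_zero
  have hθeq : θ = r * Real.pi := by
    field_simp at hr; linarith [hr]
  set q := r.den with hq
  set p := r.num with hp
  have hq1 : 1 ≤ q := r.pos
  have hqθ : (q : ℝ) * θ = (p : ℝ) * Real.pi := by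
    rw [hθeq]
    have : ((q : ℝ)) * r = (p : ℝ) := by
      rw [hq, hp]
      rw [mul_comm]
      exact_mod_cast Rat.mul_den_eq_num r
    rw [← mul_assoc, this]
  have habs : |Real.cos ((q : ℝ) * θ)| = 1 := by
    rw [hqθ]; exact Real.abs_cos_int_mul_pi p
  rw [cos_mul_eq θ hcos q] at habs
  have h5 : (0 : ℝ) < 5 ^ q := by positivity
  rw [abs_div, abs_of_pos h5] at habs
  have hR : |(aSeq q : ℝ)| = 5 ^ q := by
    field_simp at habs
    exact habs
  have hz : |aSeq q| = 5 ^ q := by exact_mod_cast hR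
  have hdvd : (5 : ℤ) ∣ aSeq q :=
    (dvd_abs 5 _).mp (hz ▸ dvd_pow_self 5 (by omega))
  obtain ⟨m, hm⟩ := Nat.exists_eq_add_of_le hq1
  rw [hm, add_comm] at hdvd
  exact aSeq_not_dvd m hdvd
end

section
/- The complex number 3/5 + (4/5)i is not a root of unity; that is, there is no positive integer n with (3/5 + (4/5)i)ⁿ = 1. -/
open GaussianInt in
lemma gauss_key (n : ℕ) (hn : 0 < n) :
    (((⟨3, 4⟩ : GaussianInt)) ^ n).re % 5 = 3 ∧ (((⟨3, 4⟩ : GaussianInt)) ^ n).im % 5 = 4 := by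
  induction n with
  | zero => omega
  | succ m ih =>
    rcases Nat.eq_zero_or_pos m with hm | hm
    · subst hm; rw [pow_one]; exact ⟨rfl, rfl⟩
    · obtain ⟨h1, h2⟩ := ih hm
      rw [pow_succ]
      constructor
      · rw [Zsqrtd.re_mul]
        simp only [show ((⟨3,4⟩ : GaussianInt)).re = 3 from rfl,
          show ((⟨3,4⟩ : GaussianInt)).im = 4 from rfl]
        omega
      · rw [Zsqrtd.im_mul]
        simp only [show ((⟨3,4⟩ : GaussianInt)).re = 3 from rfl,
          show ((⟨3,4⟩ : GaussianInt)).im = 4 from rfl]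
        omega

open Complex in
theorem three_fifths_add_four_fifths_I_not_root_of_unity :
    ¬ ∃ n : ℕ, 0 < n ∧ ((3 / 5 : ℂ) + (4 / 5 : ℂ) * Complex.I) ^ n = 1 := by
  rintro ⟨n, hn, h⟩
  have h5 : ((3 : ℂ) + 4 * Complex.I) ^ n = 5 ^ n := by
    have : ((3 / 5 : ℂ) + (4 / 5 : ℂ) * Complex.I) = ((3 : ℂ) + 4 * Complex.I) / 5 := by
      ring
    rw [this, div_pow, div_eq_one_iff_eq (by norm_num)] at h
    exact h
  have hmap : GaussianInt.toComplex ((⟨3, 4⟩ : GaussianInt) ^ n) =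
      GaussianInt.toComplex ((5 : GaussianInt) ^ n) := by
    simp only [map_pow]
    rw [GaussianInt.toComplex_def, show GaussianInt.toComplex 5 = 5 by simp [GaussianInt.toComplex_def]]
    push_cast
    rw [h5]
  have heq : (⟨3, 4⟩ : GaussianInt) ^ n = (5 : GaussianInt) ^ n :=
    GaussianInt.toComplex_injective hmap
  have him : ((5 : GaussianInt) ^ n).im = 0 := by
    have : ((5 : GaussianInt) ^ n) = ((5 ^ n : ℤ) : GaussianInt) := by push_cast; ring
    rw [this, Zsqrtd.im_intCast]
  have := (gauss_key n hn).2
  rw [heq, him] at this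
  omega
end

section
/- Let A be the matrix [[3/5, 4/5], [-4/5, 3/5]]. Then the set of powers {Aⁿ : n ∈ ℕ} is dense in SO₂(ℝ). -/
open Complex Real

theorem Circle.denseRange_pow_of_orderOf_eq_zero {z : Circle} (hz : orderOf z = 0) :
    DenseRange (z ^ · : ℕ → Circle) := by
  let e := AddCircle.homeomorphCircle (T := 1) one_ne_zero
  obtain ⟨a, rfl⟩ := e.surjective z
  have he (n : ℕ) : e (n • a) = e a ^ n := by
    simp only [e, AddCircle.homeomorphCircle_apply, AddCircle.toCircle_nsmul]
  have ha : addOrderOf a = 0 := by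
    refine addOrderOf_eq_zero_iff'.2 fun n hn h ↦ orderOf_eq_zero_iff'.1 hz n hn ?_
    rw [← he, h, ← zero_nsmul a, he, pow_zero]
  have hdense := denseRange_zsmul_iff_nsmul.1 (AddCircle.denseRange_zsmul_iff.2 ha)
  simpa [Function.comp_def, he] using e.surjective.denseRange.comp hdense e.continuous

theorem Circle.orderOf_eq_zero_of_re_eq_rat {z : Circle} {q : ℚ} (hq : (z : ℂ).re = q)
    (hq' : (q : ℝ) ∉ ({-1, -1 / 2, 0, 1 / 2, 1} : Set ℝ)) : orderOf z = 0 := by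
  obtain ⟨θ, rfl⟩ := Circle.exp_surjective z
  have hcos : Real.cos θ = q := by simpa [exp_ofReal_mul_I_re] using hq
  refine orderOf_eq_zero_iff'.2 fun n hn h ↦ hq' (hcos ▸ niven ?_ ⟨q, hcos⟩)
  have hexp : Circle.exp (n * θ) = 1 := by
    rw [← h]
    ext
    simp [← Complex.exp_nat_mul]
  obtain ⟨k, hk⟩ := Circle.exp_eq_one.1 hexp
  exact ⟨2 * k / n, by push_cast; field_simp; linarith⟩

/-- Multiplication by `conj z` in the basis `1, I`; the conjugation matches the sign convention
of `SO2R`. -/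
noncomputable def rotationMatrix : ℂ →ₐ[ℝ] Matrix (Fin 2) (Fin 2) ℝ :=
  (Algebra.leftMulMatrix basisOneI).comp conjAe.toAlgHom

theorem rotationMatrix_apply (z : ℂ) : rotationMatrix z = !![z.re, z.im; -z.im, z.re] := by
  simp [rotationMatrix, Algebra.leftMulMatrix_complex]

theorem continuous_rotationMatrix : Continuous rotationMatrix :=
  rotationMatrix.toLinearMap.continuous_of_finiteDimensional

theorem rotationMatrix_mem_SO2R_iff (z : ℂ) : rotationMatrix z ∈ SO2R ↔ ‖z‖ = 1 := by
  simp [SO2R, rotationMatrix_apply, Complex.norm_def, Complex.normSq_apply, ← sq]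

noncomputable def Circle.toSO2R (z : Circle) : SO2R :=
  ⟨rotationMatrix z, (rotationMatrix_mem_SO2R_iff z).2 (Circle.norm_coe z)⟩

theorem Circle.continuous_toSO2R : Continuous Circle.toSO2R :=
  (continuous_rotationMatrix.comp continuous_subtype_val).subtype_mk _

theorem Circle.toSO2R_surjective : Function.Surjective Circle.toSO2R := by
  rintro ⟨B, h11, h10, hB⟩
  have hz : ‖(⟨B 0 0, B 0 1⟩ : ℂ)‖ = 1 := by
    rw [← rotationMatrix_mem_SO2R_iff]
    simpa [SO2R, rotationMatrix_apply] using hB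
  refine ⟨⟨⟨B 0 0, B 0 1⟩, mem_sphere_zero_iff_norm.2 hz⟩, Subtype.ext ?_⟩
  ext i j
  fin_cases i <;> fin_cases j <;> simp [Circle.toSO2R, rotationMatrix_apply, h11, h10]

/-- The powers of the rotation matrix `[[3/5, 4/5], [-4/5, 3/5]]` form a dense
subset of `SO₂(ℝ)`. -/
theorem powers_of_A_dense_in_SO2R :
    Dense {B : SO2R |
      ∃ n : ℕ, (B : Matrix (Fin 2) (Fin 2) ℝ) = (!![3/5, 4/5; -(4/5), 3/5] : Matrix (Fin 2) (Fin 2) ℝ) ^ n} := by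
  let z : Circle := ⟨⟨3/5, 4/5⟩, mem_sphere_zero_iff_norm.2 <| by
    rw [← rotationMatrix_mem_SO2R_iff]
    norm_num [SO2R, rotationMatrix_apply]⟩
  have hA : rotationMatrix z = !![3/5, 4/5; -(4/5), 3/5] := rotationMatrix_apply z
  have hz : orderOf z = 0 :=
    Circle.orderOf_eq_zero_of_re_eq_rat (q := 3/5) (by norm_num [z]) (by norm_num)
  have hdense := Circle.toSO2R_surjective.denseRange.comp
    (Circle.denseRange_pow_of_orderOf_eq_zero hz) Circle.continuous_toSO2R
  refine hdense.mono ?_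
  rintro _ ⟨n, rfl⟩
  exact ⟨n, by simp [Circle.toSO2R, ← hA]⟩
end

section
/- Let α be a rational angle, i.e. α = (m/n)·2π for integers m, n with n ≠ 0. If sin α is a rational number, then sin α ∈ {-1, -1/2, 0, 1/2, 1}. -/
theorem sin_rational_angle_rational_values_general
    (α : ℝ) (m n : ℤ) (hα : α = ((m : ℝ) / (n : ℝ)) * (2 * Real.pi))
    (hsin : ∃ q : ℚ, Real.sin α = (q : ℝ)) :
    Real.sin α ∈ ({-1, -1/2, 0, 1/2, 1} : Set ℝ) :=
  niven_sin ⟨2 * m / n, by rw [hα]; push_cast; ring⟩ hsin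

theorem sin_rational_angle_rational_values
    (α : ℝ) (m n : ℤ) (hn : n ≠ 0) (hα : α = ((m : ℝ) / (n : ℝ)) * (2 * Real.pi))
    (hsin : ∃ q : ℚ, Real.sin α = (q : ℝ)) :
    Real.sin α ∈ ({-1, -1/2, 0, 1/2, 1} : Set ℝ) :=
  sin_rational_angle_rational_values_general α m n hα hsin
end

section
/- If q is a rational number with 2q = a/b in lowest terms (a, b coprime integers, b ≠ 0), then 2·(2q² - 1) = (a² - 2b²)/b², and a² - 2b² is coprime to b². Consequently, if 2 cos α = a/b in lowest terms with b ≠ ±1, then the denominators (in lowest terms) of the sequence 2 cos(2ᵏ α), k = 0, 1, 2, ..., are strictly increasing in absolute value. -/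
/-!
Writing `x = 2 cos θ`, the doubling formula reads `2 cos 2θ = x² - 2`. If `x = a / b` in lowest
terms then `x² - 2 = (a² - 2b²) / b²` is again in lowest terms, because `a² - 2b² ≡ a²` modulo
`b²` and `a²` is coprime to `b²`. So the denominator is squared at each doubling step, and the
denominators `|b| ^ 2 ^ k` of `2 cos (2ᵏ α)` grow strictly as soon as `|b| > 1`.
-/

open Real

def doubling {R : Type*} [Ring R] (x : R) : R := x ^ 2 - 2

lemma IsCoprime.sq_sub_two_mul_sq {R : Type*} [CommRing R] {a b : R} (h : IsCoprime a b) :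
    IsCoprime (a ^ 2 - 2 * b ^ 2) (b ^ 2) := by
  rw [sub_eq_add_neg, ← neg_mul, mul_comm]
  exact h.pow.add_mul_left_left _

lemma Real.two_mul_cos_two_pow_mul (α : ℝ) (k : ℕ) :
    2 * cos (2 ^ k * α) = doubling^[k] (2 * cos α) := by
  induction k with
  | zero => simp
  | succ k ih =>
    rw [Function.iterate_succ_apply', ← ih, doubling, pow_succ, mul_comm _ 2, mul_assoc,
      cos_two_mul]
    ring

lemma Rat.cast_doubling_iterate {R : Type*} [DivisionRing R] [CharZero R] (q : ℚ) (k : ℕ) :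
    ((doubling^[k] q : ℚ) : R) = doubling^[k] (q : R) :=
  Function.Semiconj.iterate_right (f := ((↑) : ℚ → R)) (fun x => by simp [doubling]) k q

lemma Rat.den_doubling (q : ℚ) : (doubling q).den = q.den ^ 2 := by
  rw [doubling, ← Rat.den_pow, show (2 : ℚ) = ((2 : ℤ) : ℚ) by norm_num, Rat.sub_intCast_den]

lemma Rat.den_doubling_iterate (q : ℚ) (k : ℕ) : (doubling^[k] q).den = q.den ^ 2 ^ k := by
  induction k with
  | zero => simp
  | succ k ih => rw [Function.iterate_succ_apply', Rat.den_doubling, ih, ← pow_mul, ← pow_succ]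

lemma Rat.den_intCast_div_intCast {a b : ℤ} (hb : b ≠ 0) (h : IsCoprime a b) :
    ((a : ℚ) / b).den = b.natAbs := by
  rw [← Rat.divInt_eq_div, Rat.den_divInt, if_neg hb, Int.isCoprime_iff_gcd_eq_one.mp h.symm,
    Nat.div_one]

lemma strictMono_pow_two_pow {n : ℕ} (hn : 1 < n) : StrictMono fun k : ℕ => n ^ 2 ^ k :=
  strictMono_nat_of_lt_succ fun k =>
    Nat.pow_lt_pow_right hn (Nat.pow_lt_pow_right one_lt_two k.lt_succ_self)

theorem doubling_denominators :
    (∀ (q : ℚ) (a b : ℤ), b ≠ 0 → IsCoprime a b → 2 * q = (a : ℚ) / (b : ℚ) →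
      2 * (2 * q ^ 2 - 1) = ((a ^ 2 - 2 * b ^ 2 : ℤ) : ℚ) / ((b ^ 2 : ℤ) : ℚ) ∧
        IsCoprime (a ^ 2 - 2 * b ^ 2) (b ^ 2)) ∧
    (∀ (α : ℝ) (a b : ℤ), b ≠ 0 → b ≠ 1 → b ≠ -1 → IsCoprime a b →
      2 * Real.cos α = (a : ℝ) / (b : ℝ) →
      ∃ f : ℕ → ℚ, (∀ k : ℕ, (f k : ℝ) = 2 * Real.cos (2 ^ k * α)) ∧
        StrictMono fun k => (f k).den) := by
  refine ⟨fun q a b hb hab hq => ⟨?_, hab.sq_sub_two_mul_sq⟩,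
    fun α a b hb hb₁ hbn hab hα => ⟨fun k => doubling^[k] ((a : ℚ) / b), fun k => ?_, ?_⟩⟩
  · calc 2 * (2 * q ^ 2 - 1) = (2 * q) ^ 2 - 2 := by ring
      _ = _ := by rw [hq]; push_cast; field_simp
  · rw [Rat.cast_doubling_iterate, two_mul_cos_two_pow_mul, hα]
    push_cast
    rfl
  · have hb_abs : 1 < b.natAbs := by omega
    simpa only [Rat.den_doubling_iterate, Rat.den_intCast_div_intCast hb hab]
      using strictMono_pow_two_pow hb_abs
end

section
/- Let α = (m/n)·2π be a rational angle (m, n integers, n ≠ 0). Then every complex root of the minimal polynomial over ℚ of the algebraic integer 2 cos α is real and has absolute value at most 2; that is, all conjugates of 2 cos α lie in the interval [-2, 2]. -/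
/-!
With `C n` the normalized Chebyshev polynomial, `C n (2 cos θ) = 2 cos (n θ)`. If `α = 2π m / n`
then `2 cos α` is a root of the rational polynomial `C n - 2`, so every conjugate `z` satisfies
`C n z = 2` as well. Writing `z = 2 cos θ` with `θ ∈ ℂ` gives `cos (n θ) = 1`, so `n θ ∈ 2πℤ`
and `θ` is real; hence `z = 2 cos θ` is a real number in `[-2, 2]`.
-/

open Polynomial Polynomial.Chebyshev

lemma Polynomial.Chebyshev.C_eval_two_mul_cos_of_mul_eq {θ : ℝ} {n k : ℤ}
    (h : n * θ = k * (2 * Real.pi)) : (C ℝ n).eval (2 * Real.cos θ) = 2 := by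
  rw [C_two_mul_real_cos, h, (Real.cos_eq_one_iff _).mpr ⟨k, rfl⟩, mul_one]

lemma Complex.exists_real_eq_two_mul_cos_of_C_eval_eq_two {n : ℤ} (hn : n ≠ 0) {z : ℂ}
    (hz : (C ℂ n).eval z = 2) : ∃ θ : ℝ, z = 2 * Real.cos θ := by
  obtain ⟨θ, hθ⟩ := Complex.cos_surjective (z / 2)
  have hz' : z = 2 * Complex.cos θ := by rw [hθ]; ring
  rw [hz', C_two_mul_complex_cos, mul_eq_left₀ two_ne_zero] at hz
  obtain ⟨k, hk⟩ := Complex.cos_eq_one_iff.mp hz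
  refine ⟨k * (2 * Real.pi) / n, ?_⟩
  have hθ_real : θ = ((k * (2 * Real.pi) / n : ℝ) : ℂ) := by
    push_cast
    rw [eq_div_iff (Int.cast_ne_zero.mpr hn)]
    linear_combination -hk
  rw [hz', hθ_real, Complex.ofReal_cos]

lemma Complex.im_eq_zero_and_norm_le_two_of_eq_two_mul_cos {z : ℂ} {θ : ℝ}
    (hz : z = 2 * Real.cos θ) : z.im = 0 ∧ ‖z‖ ≤ 2 := by
  have hz' : z = ((2 * Real.cos θ : ℝ) : ℂ) := by rw [hz]; push_cast; rfl
  refine ⟨by rw [hz', Complex.ofReal_im], ?_⟩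
  rw [hz', Complex.norm_real, Real.norm_eq_abs, abs_mul, abs_two]
  nlinarith [Real.abs_cos_le_one θ]

theorem conjugates_of_two_cos_rational_angle
    (α : ℝ) (m n : ℤ) (hn : n ≠ 0) (hα : α = ((m : ℝ) / (n : ℝ)) * (2 * Real.pi))
    (z : ℂ) (hz : Polynomial.aeval z (minpoly ℚ (2 * Real.cos α)) = 0) :
    z.im = 0 ∧ ‖z‖ ≤ 2 := by
  have hnα : (n : ℝ) * α = m * (2 * Real.pi) := by
    rw [hα]; field_simp
  have hroot : aeval (2 * Real.cos α) (C ℚ n - 2) = 0 := by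
    rw [map_sub, Chebyshev.aeval_C, C_eval_two_mul_cos_of_mul_eq hnα, map_ofNat, sub_self]
  obtain ⟨q, hq⟩ := minpoly.dvd ℚ _ hroot
  have hCz : (C ℂ n).eval z = 2 := by
    have hzroot : aeval z (C ℚ n - 2) = 0 := by rw [hq, map_mul, hz, zero_mul]
    rwa [map_sub, Chebyshev.aeval_C, map_ofNat, sub_eq_zero] at hzroot
  obtain ⟨θ, hθ⟩ := Complex.exists_real_eq_two_mul_cos_of_C_eval_eq_two hn hCz
  exact Complex.im_eq_zero_and_norm_le_two_of_eq_two_mul_cos hθ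
end

section
/- Let x be a real algebraic integer of degree 2 over ℚ such that |x| < 2 and the other root x̄ of its minimal polynomial also satisfies |x̄| < 2. Then x ∈ {√2, -√2, √3, -√3, (1+√5)/2, (1-√5)/2, (-1+√5)/2, (-1-√5)/2}. -/
/-!
Write the minimal polynomial of `x` as `X ^ 2 + b X + c` with `b c : ℤ`; its other root is
`-b - x`. Both roots lie in `(-2, 2)`, so `|b| < 4` and the polynomial is positive at `±2`,
while `x` is irrational, so the discriminant `b ^ 2 - 4 c` is a non-negative non-square.
Only `X ^ 2 - 2`, `X ^ 2 - 3` and `X ^ 2 ± X - 1` survive these constraints.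
-/

open Polynomial

lemma Polynomial.Monic.eq_X_sq_add_C_mul_X_add_C {R : Type*} [CommRing R] {p : R[X]}
    (hp : p.Monic) (hdeg : p.natDegree = 2) :
    p = X ^ 2 + C (p.coeff 1) * X + C (p.coeff 0) := by
  ext n
  rcases n with _ | _ | _ | n
  · simp
  · simp
  · simpa [coeff_X, hdeg] using hp.coeff_natDegree
  · simp [coeff_eq_zero_of_natDegree_lt (show p.natDegree < n + 3 by omega)]

lemma exists_minpoly_rat_eq_X_sq_add {A : Type*} [CommRing A] [IsDomain A] [Algebra ℚ A] {x : A}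
    (hint : IsIntegral ℤ x) (hdeg : (minpoly ℚ x).natDegree = 2) :
    ∃ b c : ℤ, minpoly ℚ x = X ^ 2 + C (b : ℚ) * X + C (c : ℚ) := by
  have hmap := minpoly.isIntegrallyClosed_eq_field_fractions' ℚ hint
  have hdegℤ : (minpoly ℤ x).natDegree = 2 := by
    rwa [hmap, natDegree_map_eq_of_injective (algebraMap ℤ ℚ).injective_int] at hdeg
  obtain ⟨b, c, hbc⟩ : ∃ b c : ℤ, minpoly ℤ x = X ^ 2 + C b * X + C c :=
    ⟨_, _, (minpoly.monic hint).eq_X_sq_add_C_mul_X_add_C hdegℤ⟩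
  exact ⟨b, c, by rw [hmap, hbc]; simp⟩

lemma irrational_of_natDegree_minpoly_ne_one {x : ℝ} (h : (minpoly ℚ x).natDegree ≠ 1) :
    Irrational x := by
  rintro ⟨q, rfl⟩
  exact h (minpoly.natDegree_eq_one_iff.mpr ⟨q, rfl⟩)

lemma eq_or_eq_of_sq_add_mul_add_eq_zero {K : Type*} [Field K] [NeZero (2 : K)] {x b c s : K}
    (h : x ^ 2 + b * x + c = 0) (hs : s ^ 2 = b ^ 2 - 4 * c) : x = (-b + s) / 2 ∨ x = (-b - s) / 2 := by
  have hd : discrim 1 b c = s * s := by rw [discrim]; linear_combination -hs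
  simpa using (quadratic_eq_zero_iff one_ne_zero hd x).mp (by linear_combination h)

lemma not_isSquare_discrim_of_irrational {x : ℝ} (hx : Irrational x) {b c : ℤ}
    (h : x ^ 2 + b * x + c = 0) : ¬ IsSquare (discrim 1 b c) := by
  rintro ⟨k, hk⟩
  have hkℝ : (k : ℝ) ^ 2 = b ^ 2 - 4 * c := by
    rw [discrim] at hk
    exact_mod_cast by linear_combination -hk
  rcases eq_or_eq_of_sq_add_mul_add_eq_zero h hkℝ with h | h
  · exact hx ⟨(-b + k) / 2, by push_cast [h]; ring⟩
  · exact hx ⟨(-b - k) / 2, by push_cast [h]; ring⟩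

lemma coeff_bounds_of_roots_abs_lt_two {x : ℝ} {b c : ℤ} (h : x ^ 2 + b * x + c = 0)
    (hx : |x| < 2) (hy : |-b - x| < 2) :
    |b| < 4 ∧ 0 < 4 + 2 * b + c ∧ 0 < 4 - 2 * b + c ∧ 0 ≤ discrim 1 b c := by
  obtain ⟨hx₁, hx₂⟩ := abs_lt.mp hx
  obtain ⟨hy₁, hy₂⟩ := abs_lt.mp hy
  have hb : |(b : ℝ)| < 4 := abs_lt.mpr ⟨by linarith, by linarith⟩
  -- `4 ± 2 b + c` is the value of the polynomial at `±2`, i.e. `(2 ∓ x) (2 ∓ y)`.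
  have h₂ : (0 : ℝ) < 4 + 2 * b + c := by nlinarith [mul_pos (sub_pos.2 hx₂) (sub_pos.2 hy₂)]
  have hm₂ : (0 : ℝ) < 4 - 2 * b + c := by
    nlinarith [mul_pos (neg_lt_iff_pos_add.1 hx₁) (neg_lt_iff_pos_add.1 hy₁)]
  have hd : (0 : ℝ) ≤ b ^ 2 - 4 * 1 * c := by
    rw [show (b : ℝ) ^ 2 - 4 * 1 * c = (2 * x + b) ^ 2 by linear_combination -4 * h]
    positivity
  exact ⟨by exact_mod_cast hb, by exact_mod_cast h₂, by exact_mod_cast hm₂,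
    by rw [discrim]; exact_mod_cast hd⟩

lemma coeffs_eq_of_not_isSquare_discrim {b c : ℤ} (hb : |b| < 4) (h₂ : 0 < 4 + 2 * b + c)
    (hm₂ : 0 < 4 - 2 * b + c) (hd : 0 ≤ discrim 1 b c) (hsq : ¬ IsSquare (discrim 1 b c)) :
    b = 0 ∧ c = -2 ∨ b = 0 ∧ c = -3 ∨ b = 1 ∧ c = -1 ∨ b = -1 ∧ c = -1 := by
  rw [discrim] at hd hsq
  obtain ⟨hb₁, hb₂⟩ := abs_lt.mp hb
  have hc₁ : -4 < c := by omega
  have hc₂ : c ≤ 2 := by nlinarith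
  interval_cases b <;> interval_cases c <;> first
    | omega
    | exact absurd ⟨0, rfl⟩ hsq
    | exact absurd ⟨1, rfl⟩ hsq
    | exact absurd ⟨2, rfl⟩ hsq

lemma mem_of_sq_add_mul_add_eq_zero {x : ℝ} {b c : ℤ}
    (hbc : b = 0 ∧ c = -2 ∨ b = 0 ∧ c = -3 ∨ b = 1 ∧ c = -1 ∨ b = -1 ∧ c = -1)
    (h : x ^ 2 + b * x + c = 0) :
    x ∈ ({√2, -√2, √3, -√3, (1 + √5) / 2, (1 - √5) / 2, (-1 + √5) / 2, (-1 - √5) / 2} :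
      Set ℝ) := by
  rcases hbc with ⟨rfl, rfl⟩ | ⟨rfl, rfl⟩ | ⟨rfl, rfl⟩ | ⟨rfl, rfl⟩ <;> push_cast at h
  · obtain rfl | rfl := eq_or_eq_of_sq_add_mul_add_eq_zero h (s := 2 * √2) (by norm_num [mul_pow])
      <;> simp [neg_div]
  · obtain rfl | rfl := eq_or_eq_of_sq_add_mul_add_eq_zero h (s := 2 * √3) (by norm_num [mul_pow])
      <;> simp [neg_div]
  · obtain rfl | rfl := eq_or_eq_of_sq_add_mul_add_eq_zero h (s := √5) (by norm_num) <;> simp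
  · obtain rfl | rfl := eq_or_eq_of_sq_add_mul_add_eq_zero h (s := √5) (by norm_num) <;> simp

theorem quadratic_integers_with_small_conjugates
    (x : ℝ) (hint : IsIntegral ℤ x) (hdeg : (minpoly ℚ x).natDegree = 2)
    (hx : |x| < 2)
    (hconj : ∀ y : ℂ, Polynomial.aeval y (minpoly ℚ x) = 0 → ‖y‖ < 2) :
    x ∈ ({Real.sqrt 2, -Real.sqrt 2, Real.sqrt 3, -Real.sqrt 3,
          (1 + Real.sqrt 5) / 2, (1 - Real.sqrt 5) / 2,
          (-1 + Real.sqrt 5) / 2, (-1 - Real.sqrt 5) / 2} : Set ℝ) := by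
  obtain ⟨b, c, hmin⟩ := exists_minpoly_rat_eq_X_sq_add hint hdeg
  have hroot : x ^ 2 + b * x + c = 0 := by simpa [hmin] using minpoly.aeval ℚ x
  have hconj_root : aeval ((-b - x : ℝ) : ℂ) (minpoly ℚ x) = 0 := by
    rw [hmin]
    simp only [map_add, map_mul, map_pow, aeval_X, aeval_C, eq_ratCast, Rat.cast_intCast]
    exact_mod_cast (by linear_combination hroot : (-b - x) ^ 2 + b * (-b - x) + c = (0 : ℝ))
  have hy : |-b - x| < 2 := by
    simpa only [Complex.norm_real, Real.norm_eq_abs] using hconj _ hconj_root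
  obtain ⟨hb, h₂, hm₂, hd⟩ := coeff_bounds_of_roots_abs_lt_two hroot hx hy
  have hsq := not_isSquare_discrim_of_irrational
    (irrational_of_natDegree_minpoly_ne_one (by omega)) hroot
  exact mem_of_sq_add_mul_add_eq_zero (coeffs_eq_of_not_isSquare_discrim hb h₂ hm₂ hd hsq) hroot
end

section
/- The only monic irreducible cubic polynomials with integer coefficients all of whose three roots are real and lie in the open interval (-2, 2) are X³ - X² - 2X + 1, X³ + X² - 2X - 1, X³ - 3X + 1, and X³ - 3X - 1. -/
/-! If `p = X³ + bX² + cX + d` has three distinct roots `x, y, z` in `(-2, 2)`, then Vieta's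
formulas give `|b| < 6`, `|c| < 12`, `|d| < 8`, as well as `x² + y² + z² = b² - 2c < 12`,
`p(-2) < 0 < p(2)` and a positive discriminant `((x - y)(x - z)(y - z))²`. Irreducibility over `ℚ`
rules out rational roots, in particular the roots `-1, 0, 1`. A finite search through the
remaining coefficients leaves exactly the four cubics.

Conversely, each of the four cubics changes sign on `-2 < -1 < 1 < 2`, so it has three real roots
in `(-2, 2)`; its constant term is `±1` and `±1` are not roots, so by the integral root theorem it
has no rational root and is irreducible. -/

open Polynomial

namespace Polynomial

theorem Monic.eq_cubic_toPoly {R : Type*} [Semiring R] {p : R[X]} (hp : p.Monic)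
    (hdeg : p.natDegree = 3) : p = Cubic.toPoly ⟨1, p.coeff 2, p.coeff 1, p.coeff 0⟩ := by
  have h := congrArg Subtype.val
    (Cubic.equiv.apply_symm_apply ⟨p, degree_le_of_natDegree_le hdeg.le⟩)
  have h3 : p.coeff 3 = 1 := hdeg ▸ hp.coeff_natDegree
  simpa [Cubic.equiv, h3] using h.symm

theorem irreducible_map_iff_forall_not_isRoot {A K : Type*} [CommRing A] [IsDomain A]
    [UniqueFactorizationMonoid A] [Field K] [Algebra A K] [IsFractionRing A K] {p : A[X]}
    (hp : p.Monic) (h2 : 2 ≤ p.natDegree) (h3 : p.natDegree ≤ 3) :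
    Irreducible (p.map (algebraMap A K)) ↔ ∀ a : A, ¬ p.IsRoot a := by
  have hdeg : (p.map (algebraMap A K)).natDegree = p.natDegree := hp.natDegree_map _
  rw [(hp.map _).irreducible_iff_roots_eq_zero_of_degree_le_three (hdeg ▸ h2) (hdeg ▸ h3),
    Multiset.eq_zero_iff_forall_notMem]
  simp only [mem_roots (hp.map _).ne_zero, IsRoot.def, eval_map_algebraMap]
  constructor
  · intro h a ha
    apply h (algebraMap A K a)
    rw [aeval_algebraMap_apply, coe_aeval_eq_eval, ha, map_zero]
  · intro h r hr
    obtain ⟨a, rfl, -⟩ := exists_integer_of_is_root_of_monic hp hr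
    rw [aeval_algebraMap_apply, map_eq_zero_iff _ (IsFractionRing.injective A K),
      coe_aeval_eq_eval] at hr
    exact h a hr

theorem not_isRoot_of_isUnit_coeff_zero {p : ℤ[X]} (hp : IsUnit (p.coeff 0))
    (h1 : ¬ p.IsRoot 1) (hm1 : ¬ p.IsRoot (-1)) (n : ℤ) : ¬ p.IsRoot n := by
  intro hn
  rcases Int.isUnit_iff.mp (isUnit_of_dvd_unit hn.dvd_coeff_zero hp) with rfl | rfl
  exacts [h1 hn, hm1 hn]

theorem squarefree_map_of_irreducible_map_rat {K : Type*} [Field K] [CharZero K] {p : ℤ[X]}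
    (hp : Irreducible (p.map (Int.castRingHom ℚ))) : Squarefree (p.map (Int.castRingHom K)) := by
  have hcomp : (algebraMap ℚ K).comp (Int.castRingHom ℚ) = Int.castRingHom K :=
    RingHom.ext_int _ _
  simpa [map_map, hcomp] using (hp.separable.map (f := algebraMap ℚ K)).squarefree

theorem ne_of_squarefree_mul_X_sub_C {R : Type*} [CommRing R] [Nontrivial R] {x y : R}
    {f : R[X]} (h : Squarefree ((X - C x) * (X - C y) * f)) : x ≠ y := by
  rintro rfl
  exact not_isUnit_X_sub_C x (h _ ⟨f, rfl⟩)

theorem eq_prod_X_sub_C_of_isRoot {R : Type*} [CommRing R] [IsDomain R] {f : R[X]} (hf : f.Monic)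
    (hdeg : f.natDegree = 3) {x y z : R} (hxy : x ≠ y) (hxz : x ≠ z) (hyz : y ≠ z)
    (hx : f.IsRoot x) (hy : f.IsRoot y) (hz : f.IsRoot z) :
    f = (X - C x) * (X - C y) * (X - C z) := by
  have hle : ({x, y, z} : Multiset R) ≤ f.roots :=
    (Multiset.le_iff_subset (by simp [hxy, hxz, hyz])).mpr
      (by simp [hf.ne_zero, hx.eq_zero, hy.eq_zero, hz.eq_zero])
  have hdvd : (X - C x) * (X - C y) * (X - C z) ∣ f := by
    simpa [mul_assoc] using (Multiset.prod_X_sub_C_dvd_iff_le_roots hf.ne_zero _).mpr hle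
  refine eq_of_monic_of_dvd_of_natDegree_le (by monicity!) hf hdvd ?_
  have : ((X - C x) * (X - C y) * (X - C z)).natDegree = 3 := by compute_degree!
  omega

theorem exists_eq_prod_X_sub_C_of_natDegree_eq_three {K : Type*} [Field K] [IsAlgClosed K]
    {f : K[X]} (hf : f.Monic) (hdeg : f.natDegree = 3) :
    ∃ a b c : K, f = (X - C a) * (X - C b) * (X - C c) := by
  have hsplit := IsAlgClosed.splits f
  obtain ⟨a, b, c, habc⟩ :=
    Multiset.card_eq_three.mp (hdeg ▸ splits_iff_card_roots.mp hsplit)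
  refine ⟨a, b, c, ?_⟩
  conv_lhs => rw [hsplit.eq_prod_roots_of_monic hf, habc]
  simp [mul_assoc]

theorem aeval_prod_X_sub_C_eq_zero_iff {x y z : ℝ} {w : ℂ} :
    aeval w ((X - C x) * (X - C y) * (X - C z)) = 0 ↔ w = x ∨ w = y ∨ w = z := by
  simp [sub_eq_zero, or_assoc]

theorem exists_eq_prod_X_sub_C_of_forall_im_eq_zero {q : ℝ[X]} (hq : q.Monic)
    (hdeg : q.natDegree = 3) (him : ∀ w : ℂ, aeval w q = 0 → w.im = 0) :
    ∃ x y z : ℝ, q = (X - C x) * (X - C y) * (X - C z) := by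
  obtain ⟨a, b, c, hfac⟩ := exists_eq_prod_X_sub_C_of_natDegree_eq_three
    (hq.map (algebraMap ℝ ℂ)) (by rwa [hq.natDegree_map])
  have hreal : ∀ w : ℂ, w = a ∨ w = b ∨ w = c → (w.re : ℂ) = w := by
    intro w hw
    have hroot : aeval w q = 0 := by
      rw [aeval_def, ← eval_map, hfac]
      rcases hw with rfl | rfl | rfl <;> simp
    exact Complex.ext rfl (by simp [him w hroot])
  refine ⟨a.re, b.re, c.re, map_injective (algebraMap ℝ ℂ) (algebraMap ℝ ℂ).injective ?_⟩
  simp [hfac, hreal a (by simp), hreal b (by simp), hreal c (by simp)]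

theorem exists_eq_prod_X_sub_C_of_roots_mem_Ioo {q : ℝ[X]} (hq : q.Monic) (hdeg : q.natDegree = 3)
    (hsq : Squarefree q)
    (hroots : ∀ w : ℂ, aeval w q = 0 → w.im = 0 ∧ -2 < w.re ∧ w.re < 2) :
    ∃ x y z : ℝ, (|x| < 2 ∧ |y| < 2 ∧ |z| < 2) ∧ (x ≠ y ∧ x ≠ z ∧ y ≠ z) ∧
      q = (X - C x) * (X - C y) * (X - C z) := by
  obtain ⟨x, y, z, rfl⟩ :=
    exists_eq_prod_X_sub_C_of_forall_im_eq_zero hq hdeg fun w hw => (hroots w hw).1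
  have habs : ∀ r : ℝ, r = x ∨ r = y ∨ r = z → |r| < 2 := fun r hr =>
    abs_lt.mpr (by simpa using (hroots r (aeval_prod_X_sub_C_eq_zero_iff.mpr (by
      exact_mod_cast hr))).2)
  refine ⟨x, y, z, ⟨habs x (by simp), habs y (by simp), habs z (by simp)⟩,
    ⟨ne_of_squarefree_mul_X_sub_C hsq, ne_of_squarefree_mul_X_sub_C (f := X - C y) ?_,
      ne_of_squarefree_mul_X_sub_C (f := X - C x) ?_⟩, rfl⟩ <;>
  convert hsq using 1 <;> ring

theorem im_eq_zero_and_re_mem_Ioo_of_sign_changes {q : ℝ[X]} (hq : q.Monic)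
    (hdeg : q.natDegree = 3) {a t s b : ℝ} (hat : a ≤ t) (hts : t ≤ s) (hsb : s ≤ b)
    (ha : q.eval a < 0) (ht : 0 < q.eval t) (hs : q.eval s < 0) (hb : 0 < q.eval b) {w : ℂ}
    (hw : aeval w q = 0) : w.im = 0 ∧ w.re ∈ Set.Ioo a b := by
  have hcont : Continuous fun r => q.eval r := q.continuous
  obtain ⟨x, hx, hx0⟩ := intermediate_value_Ioo hat hcont.continuousOn ⟨ha, ht⟩
  obtain ⟨y, hy, hy0⟩ := intermediate_value_Ioo' hts hcont.continuousOn ⟨hs, ht⟩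
  obtain ⟨z, hz, hz0⟩ := intermediate_value_Ioo hsb hcont.continuousOn ⟨hs, hb⟩
  rw [eq_prod_X_sub_C_of_isRoot hq hdeg (hx.2.trans hy.1).ne
      (hx.2.trans_le (hts.trans hz.1.le)).ne (hy.2.trans hz.1).ne hx0 hy0 hz0,
    aeval_prod_X_sub_C_eq_zero_iff] at hw
  rcases hw with rfl | rfl | rfl <;> refine ⟨Complex.ofReal_im _, ?_⟩ <;>
    rw [Complex.ofReal_re] <;> constructor <;> linarith [hx.1, hx.2, hy.1, hy.2, hz.1, hz.2]

theorem irreducible_and_forall_aeval_eq_zero_of_sign_changes {p : ℤ[X]} (hp : p.Monic)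
    (hdeg : p.natDegree = 3) (hunit : IsUnit (p.coeff 0))
    (hsign : p.eval (-2) < 0 ∧ 0 < p.eval (-1) ∧ p.eval 1 < 0 ∧ 0 < p.eval 2) :
    Irreducible (p.map (Int.castRingHom ℚ)) ∧
      ∀ w : ℂ, aeval w p = 0 → w.im = 0 ∧ -2 < w.re ∧ w.re < 2 := by
  obtain ⟨hm2, hm1, h1, h2⟩ := hsign
  refine ⟨(irreducible_map_iff_forall_not_isRoot hp (by omega) (by omega)).mpr
    (not_isRoot_of_isUnit_coeff_zero hunit h1.ne hm1.ne'), fun w hw => ?_⟩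
  have hcast (n : ℤ) : (p.map (Int.castRingHom ℝ)).eval (n : ℝ) = p.eval n :=
    eval_intCast_map _ _ _
  have := im_eq_zero_and_re_mem_Ioo_of_sign_changes (hp.map (Int.castRingHom ℝ))
    (by rwa [hp.natDegree_map]) (a := (-2 : ℤ)) (t := (-1 : ℤ)) (s := (1 : ℤ)) (b := (2 : ℤ))
    (by norm_num) (by norm_num) (by norm_num)
    ((hcast _).trans_lt (Int.cast_lt_zero.mpr hm2))
    ((Int.cast_pos.mpr hm1).trans_eq (hcast _).symm)
    ((hcast _).trans_lt (Int.cast_lt_zero.mpr h1))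
    ((Int.cast_pos.mpr h2).trans_eq (hcast _).symm)
    ((aeval_map_algebraMap ℝ w p).trans hw)
  simpa using this

end Polynomial

theorem abs_esymm_lt_of_abs_lt_two {x y z : ℝ} (hx : |x| < 2) (hy : |y| < 2) (hz : |z| < 2) :
    |x + y + z| < 6 ∧ |x * y + x * z + y * z| < 12 ∧ |x * y * z| < 8 := by
  have habs {u v : ℝ} (hu : |u| < 2) (hv : |v| < 2) : |u * v| < 4 := by
    rw [abs_mul]; nlinarith [abs_nonneg u, abs_nonneg v]
  refine ⟨by linarith [abs_add_three x y z], ?_, ?_⟩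
  · linarith [abs_add_three (x * y) (x * z) (y * z), habs hx hy, habs hx hz, habs hy hz]
  · rw [abs_mul]; nlinarith [habs hx hy, abs_nonneg (x * y), abs_nonneg z]

namespace Cubic

theorem map_eq_of_toPoly_map_eq {R S : Type*} [Semiring R] [CommRing S] {P : Cubic R}
    {φ : R →+* S} {x y z : S} (h : P.toPoly.map φ = (X - C x) * (X - C y) * (X - C z)) :
    P.map φ = ⟨1, -(x + y + z), x * y + x * z + y * z, -(x * y * z)⟩ :=
  (toPoly_injective _ _).mp (by rw [map_toPoly, h, prod_X_sub_C_eq])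

theorem eq_of_coeff_constraints :
    ∀ b ∈ Finset.Ioo (-6 : ℤ) 6, ∀ c ∈ Finset.Ioo (-12 : ℤ) 12, ∀ d ∈ Finset.Ioo (-8 : ℤ) 8,
      b ^ 2 - 2 * c < 12 → (-2) ^ 3 + b * (-2) ^ 2 + c * (-2) + d < 0 →
      0 < 2 ^ 3 + b * 2 ^ 2 + c * 2 + d →
      (∀ n ∈ ({-1, 0, 1} : Finset ℤ), n ^ 3 + b * n ^ 2 + c * n + d ≠ 0) →
      0 < (⟨1, b, c, d⟩ : Cubic ℤ).discr →
      (b, c, d) = (-1, -2, 1) ∨ (b, c, d) = (1, -2, -1) ∨ (b, c, d) = (0, -3, 1) ∨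
        (b, c, d) = (0, -3, -1) := by
  decide

theorem coeff_bounds_of_roots_abs_lt_two {b c d : ℤ} {x y z : ℝ}
    (hx : |x| < 2) (hy : |y| < 2) (hz : |z| < 2)
    (hb : (b : ℝ) = -(x + y + z)) (hc : (c : ℝ) = x * y + x * z + y * z)
    (hd : (d : ℝ) = -(x * y * z)) : |b| < 6 ∧ |c| < 12 ∧ |d| < 8 ∧ b ^ 2 - 2 * c < 12 := by
  obtain ⟨he₁, he₂, he₃⟩ := abs_esymm_lt_of_abs_lt_two hx hy hz
  refine ⟨by rify; rwa [hb, abs_neg], by rify; rwa [hc], by rify; rwa [hd, abs_neg], ?_⟩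
  rify; rw [hb, hc]
  nlinarith [sq_abs x, sq_abs y, sq_abs z, abs_nonneg x, abs_nonneg y, abs_nonneg z]

theorem toPoly_eq_of_roots_abs_lt_two {b c d : ℤ} {x y z : ℝ}
    (hx : |x| < 2) (hy : |y| < 2) (hz : |z| < 2) (hxy : x ≠ y) (hxz : x ≠ z) (hyz : y ≠ z)
    (hb : (b : ℝ) = -(x + y + z)) (hc : (c : ℝ) = x * y + x * z + y * z)
    (hd : (d : ℝ) = -(x * y * z)) (hroot : ∀ n : ℤ, ¬ (toPoly ⟨1, b, c, d⟩).IsRoot n) :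
    toPoly ⟨1, b, c, d⟩ = X ^ 3 - X ^ 2 - 2 * X + 1 ∨
      toPoly ⟨1, b, c, d⟩ = X ^ 3 + X ^ 2 - 2 * X - 1 ∨
      toPoly ⟨1, b, c, d⟩ = X ^ 3 - 3 * X + 1 ∨ toPoly ⟨1, b, c, d⟩ = X ^ 3 - 3 * X - 1 := by
  obtain ⟨hb6, hc12, hd8, hsq⟩ := coeff_bounds_of_roots_abs_lt_two hx hy hz hb hc hd
  obtain ⟨hx₁, hx₂⟩ := abs_lt.mp hx
  obtain ⟨hy₁, hy₂⟩ := abs_lt.mp hy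
  obtain ⟨hz₁, hz₂⟩ := abs_lt.mp hz
  have hneg : (-2) ^ 3 + b * (-2) ^ 2 + c * (-2) + d < 0 := by
    rify
    calc ((-2) ^ 3 + b * (-2) ^ 2 + c * (-2) + d : ℝ) = -((2 + x) * (2 + y) * (2 + z)) := by
          rw [hb, hc, hd]; ring
      _ < 0 := neg_neg_of_pos (mul_pos (mul_pos (by linarith) (by linarith)) (by linarith))
  have hpos : 0 < 2 ^ 3 + b * 2 ^ 2 + c * 2 + d := by
    rify
    calc (0 : ℝ) < (2 - x) * (2 - y) * (2 - z) :=
          mul_pos (mul_pos (by linarith) (by linarith)) (by linarith)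
      _ = 2 ^ 3 + b * 2 ^ 2 + c * 2 + d := by rw [hb, hc, hd]; ring
  have hdisc : 0 < (⟨1, b, c, d⟩ : Cubic ℤ).discr := by
    rify
    calc (0 : ℝ) < ((x - y) * (x - z) * (y - z)) ^ 2 := by
          have := mul_ne_zero (mul_ne_zero (sub_ne_zero.mpr hxy) (sub_ne_zero.mpr hxz))
            (sub_ne_zero.mpr hyz)
          positivity
      _ = _ := by simp only [discr]; push_cast; rw [hb, hc, hd]; ring
  rcases eq_of_coeff_constraints b (Finset.mem_Ioo.mpr (abs_lt.mp hb6)) c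
    (Finset.mem_Ioo.mpr (abs_lt.mp hc12)) d (Finset.mem_Ioo.mpr (abs_lt.mp hd8)) hsq hneg hpos
    (fun n _ => by simpa [toPoly] using hroot n) hdisc with h | h | h | h <;>
  simp only [Prod.mk.injEq] at h <;> obtain ⟨rfl, rfl, rfl⟩ := h <;>
  simp only [toPoly, map_one, map_neg, map_zero, map_ofNat, one_mul, zero_mul]
  · left; ring
  · right; left; ring
  · right; right; left; ring
  · right; right; right; ring

end Cubic

open Polynomial in
theorem cubics_with_all_roots_in_Ioo (p : ℤ[X]) :
    (p.Monic ∧ p.natDegree = 3 ∧ Irreducible (p.map (Int.castRingHom ℚ)) ∧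
      ∀ z : ℂ, Polynomial.aeval z p = 0 → z.im = 0 ∧ -2 < z.re ∧ z.re < 2) ↔
    (p = X ^ 3 - X ^ 2 - 2 * X + 1 ∨ p = X ^ 3 + X ^ 2 - 2 * X - 1 ∨
     p = X ^ 3 - 3 * X + 1 ∨ p = X ^ 3 - 3 * X - 1) := by
  constructor
  · rintro ⟨hmonic, hdeg, hirr, hroots⟩
    obtain ⟨x, y, z, ⟨hx, hy, hz⟩, ⟨hxy, hxz, hyz⟩, hfac⟩ :=
      exists_eq_prod_X_sub_C_of_roots_mem_Ioo (hmonic.map _) (by rwa [hmonic.natDegree_map])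
        (squarefree_map_of_irreducible_map_rat hirr)
        fun w hw => hroots w ((aeval_map_algebraMap ℝ w p).symm.trans hw)
    have hnoroot :=
      (irreducible_map_iff_forall_not_isRoot hmonic (by omega) (by omega)).mp hirr
    have hP := hmonic.eq_cubic_toPoly hdeg
    obtain ⟨-, hb, hc, hd⟩ := Cubic.mk.inj (Cubic.map_eq_of_toPoly_map_eq (hP ▸ hfac))
    rw [hP] at hnoroot ⊢
    exact Cubic.toPoly_eq_of_roots_abs_lt_two hx hy hz hxy hxz hyz hb hc hd hnoroot
  · intro hp
    have hmonic : p.Monic := by rcases hp with rfl | rfl | rfl | rfl <;> monicity!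
    have hdeg : p.natDegree = 3 := by rcases hp with rfl | rfl | rfl | rfl <;> compute_degree!
    have hunit : IsUnit (p.coeff 0) := by rcases hp with rfl | rfl | rfl | rfl <;> simp
    have hsign : p.eval (-2) < 0 ∧ 0 < p.eval (-1) ∧ p.eval 1 < 0 ∧ 0 < p.eval 2 := by
      rcases hp with rfl | rfl | rfl | rfl <;> norm_num
    exact ⟨hmonic, hdeg,
      irreducible_and_forall_aeval_eq_zero_of_sign_changes hmonic hdeg hunit hsign⟩
end

section
/- The three real roots of the polynomial X³ - 3X + 1 are exactly 2 cos(2π/9), 2 cos(4π/9), and 2 cos(8π/9), and the three real roots of X³ - 3X - 1 are exactly 2 cos(π/9), 2 cos(5π/9), and 2 cos(7π/9). -/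
open Real

private lemma cubic_key (r a b c x : ℝ)
    (ha : a ^ 3 - 3 * a + r = 0) (hb : b ^ 3 - 3 * b + r = 0) (hc : c ^ 3 - 3 * c + r = 0)
    (hab : a ≠ b) (hac : a ≠ c) (hbc : b ≠ c)
    (hx : x ^ 3 - 3 * x + r = 0) : x = a ∨ x = b ∨ x = c := by
  have hab' := sub_ne_zero.mpr hab
  have hac' := sub_ne_zero.mpr hac
  have hbc' := sub_ne_zero.mpr hbc
  have h1 : a ^ 2 + a * b + b ^ 2 - 3 = 0 := by
    have h : (a - b) * (a ^ 2 + a * b + b ^ 2 - 3) = 0 := by linear_combination ha - hb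
    rcases mul_eq_zero.mp h with h | h
    · exact absurd h hab'
    · exact h
  have h3 : b ^ 2 + b * c + c ^ 2 - 3 = 0 := by
    have h : (b - c) * (b ^ 2 + b * c + c ^ 2 - 3) = 0 := by linear_combination hb - hc
    rcases mul_eq_zero.mp h with h | h
    · exact absurd h hbc'
    · exact h
  have hs1 : a + b + c = 0 := by
    have h : (a - c) * (a + b + c) = 0 := by linear_combination h1 - h3
    rcases mul_eq_zero.mp h with h | h
    · exact absurd h hac'
    · exact h
  have hs2 : a * b + b * c + c * a = -3 := by
    linear_combination (a + b) * hs1 - h1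
  have hs3 : a * b * c = -r := by
    linear_combination ha - a * h1 + a * b * hs1
  have hfac : (x - a) * ((x - b) * (x - c)) = 0 := by
    linear_combination hx - x ^ 2 * hs1 + x * hs2 - hs3
  rcases mul_eq_zero.mp hfac with h | h
  · exact Or.inl (by linarith [sub_eq_zero.mp h])
  rcases mul_eq_zero.mp h with h | h
  · exact Or.inr (Or.inl (by linarith [sub_eq_zero.mp h]))
  · exact Or.inr (Or.inr (by linarith [sub_eq_zero.mp h]))

private lemma root_of_cos (θ r : ℝ) (h : Real.cos (3 * θ) = -r / 2) :
    (2 * Real.cos θ) ^ 3 - 3 * (2 * Real.cos θ) + r = 0 := by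
  have := Real.cos_three_mul θ
  nlinarith [this, h]

private lemma cos_ne (θ₁ θ₂ : ℝ) (h0 : 0 ≤ θ₁) (h1 : θ₁ < θ₂) (h2 : θ₂ ≤ π) :
    2 * Real.cos θ₁ ≠ 2 * Real.cos θ₂ := by
  have := Real.strictAntiOn_cos (Set.mem_Icc.mpr ⟨h0, by linarith⟩)
    (Set.mem_Icc.mpr ⟨by linarith, h2⟩) h1
  intro h
  nlinarith [this]

set_option maxHeartbeats 1000000 in
open Real in
theorem roots_of_nonagon_cubics :
    (∀ x : ℝ, x ^ 3 - 3 * x + 1 = 0 ↔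
      x ∈ ({2 * Real.cos (2 * π / 9), 2 * Real.cos (4 * π / 9), 2 * Real.cos (8 * π / 9)} : Set ℝ)) ∧
    (∀ x : ℝ, x ^ 3 - 3 * x - 1 = 0 ↔
      x ∈ ({2 * Real.cos (π / 9), 2 * Real.cos (5 * π / 9), 2 * Real.cos (7 * π / 9)} : Set ℝ)) := by
  have hpi := Real.pi_pos
  have e1 : Real.cos (3 * (2 * π / 9)) = -(1:ℝ) / 2 := by
    rw [show 3 * (2 * π / 9) = π - π / 3 by ring, Real.cos_pi_sub, Real.cos_pi_div_three]; norm_num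
  have e2 : Real.cos (3 * (4 * π / 9)) = -(1:ℝ) / 2 := by
    rw [show 3 * (4 * π / 9) = π + π / 3 by ring, Real.cos_add, Real.cos_pi, Real.sin_pi,
      Real.cos_pi_div_three]; ring
  have e3 : Real.cos (3 * (8 * π / 9)) = -(1:ℝ) / 2 := by
    rw [show 3 * (8 * π / 9) = (π - π / 3) + 2 * π by ring, Real.cos_add_two_pi, Real.cos_pi_sub,
      Real.cos_pi_div_three]; norm_num
  have f1 : Real.cos (3 * (π / 9)) = -(-1:ℝ) / 2 := by
    rw [show 3 * (π / 9) = π / 3 by ring, Real.cos_pi_div_three]; norm_num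
  have f2 : Real.cos (3 * (5 * π / 9)) = -(-1:ℝ) / 2 := by
    rw [show 3 * (5 * π / 9) = 2 * π - π / 3 by ring, Real.cos_sub, Real.cos_two_pi,
      Real.sin_two_pi, Real.cos_pi_div_three]; ring
  have f3 : Real.cos (3 * (7 * π / 9)) = -(-1:ℝ) / 2 := by
    rw [show 3 * (7 * π / 9) = π / 3 + 2 * π by ring, Real.cos_add_two_pi,
      Real.cos_pi_div_three]; norm_num
  have ha1 := root_of_cos (2 * π / 9) 1 e1
  have ha2 := root_of_cos (4 * π / 9) 1 e2
  have ha3 := root_of_cos (8 * π / 9) 1 e3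
  have hb1 := root_of_cos (π / 9) (-1) f1
  have hb2 := root_of_cos (5 * π / 9) (-1) f2
  have hb3 := root_of_cos (7 * π / 9) (-1) f3
  have d12 := cos_ne (2 * π / 9) (4 * π / 9) (by linarith) (by linarith) (by linarith)
  have d13 := cos_ne (2 * π / 9) (8 * π / 9) (by linarith) (by linarith) (by linarith)
  have d23 := cos_ne (4 * π / 9) (8 * π / 9) (by linarith) (by linarith) (by linarith)
  have g12 := cos_ne (π / 9) (5 * π / 9) (by linarith) (by linarith) (by linarith)
  have g13 := cos_ne (π / 9) (7 * π / 9) (by linarith) (by linarith) (by linarith)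
  have g23 := cos_ne (5 * π / 9) (7 * π / 9) (by linarith) (by linarith) (by linarith)
  constructor
  · intro x
    simp only [Set.mem_insert_iff, Set.mem_singleton_iff]
    constructor
    · intro hx
      exact cubic_key 1 _ _ _ x ha1 ha2 ha3 d12 d13 d23 hx
    · rintro (rfl | rfl | rfl) <;> assumption
  · intro x
    simp only [Set.mem_insert_iff, Set.mem_singleton_iff]
    constructor
    · intro hx
      exact cubic_key (-1) _ _ _ x hb1 hb2 hb3 g12 g13 g23 (by linarith)
    · rintro (rfl | rfl | rfl)
      · linarith [hb1]
      · linarith [hb2]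
      · linarith [hb3]
end

section
/- Let m, n be coprime integers with n ≥ 1 and α = (m/n)·2π. Then cos α is a rational number if and only if φ(n) ≤ 2, i.e. if and only if n ∈ {1, 2, 3, 4, 6}. -/
/-!
If `cos α = q`, then `ζ = exp (i α)` is a primitive `n`-th root of unity and a root of
`X² - 2qX + 1 ∈ ℚ[X]`, so `φ n = deg Φₙ ≤ 2`. Conversely, `cos (2π / n)` is rational for
`n ∈ {1, 2, 3, 4, 6}`, and `cos (m · 2π / n) = Tₘ (cos (2π / n))` for the Chebyshev polynomial `Tₘ`,
which has integer coefficients. Finally `φ (p ^ k) ≤ 2` forces `p ^ k ≤ 4`, so `φ n ≤ 2` forces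
`n ∣ 12`, and the divisors of `12` are checked directly.
-/

open Polynomial Real
open scoped Nat

theorem Nat.prime_pow_le_two_mul_totient {p : ℕ} (hp : p.Prime) (k : ℕ) :
    p ^ k ≤ 2 * φ (p ^ k) := by
  cases k with
  | zero => simp
  | succ k =>
    rw [totient_prime_pow_succ hp, pow_succ]
    have : p ≤ 2 * (p - 1) := by have := hp.two_le; omega
    calc p ^ k * p ≤ p ^ k * (2 * (p - 1)) := Nat.mul_le_mul_left _ this
      _ = 2 * (p ^ k * (p - 1)) := by ring

theorem Nat.dvd_twelve_of_totient_le_two {n : ℕ} (hn : n ≠ 0) (h : φ n ≤ 2) : n ∣ 12 := by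
  refine (Nat.dvd_iff_prime_pow_dvd_dvd 12 n).2 fun p k hp hpk => ?_
  have hle : p ^ k ≤ 4 := calc
    p ^ k ≤ 2 * φ (p ^ k) := prime_pow_le_two_mul_totient hp k
    _ ≤ 2 * φ n := by
      gcongr
      exact Nat.le_of_dvd (totient_pos.2 (pos_of_ne_zero hn)) (totient_dvd_of_dvd hpk)
    _ ≤ 4 := by omega
  have hpos : 0 < p ^ k := pow_pos hp.pos k
  interval_cases p ^ k <;> norm_num

theorem Nat.totient_le_two_iff {n : ℕ} (hn : 1 ≤ n) :
    φ n ≤ 2 ↔ n ∈ ({1, 2, 3, 4, 6} : Set ℕ) := by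
  refine ⟨fun h => ?_, ?_⟩
  · have hdiv : n ∈ divisors 12 :=
      mem_divisors.2 ⟨dvd_twelve_of_totient_le_two (by omega) h, by norm_num⟩
    have key : ∀ d ∈ divisors 12, φ d ≤ 2 → d = 1 ∨ d = 2 ∨ d = 3 ∨ d = 4 ∨ d = 6 := by decide
    exact key n hdiv h
  · rintro (rfl | rfl | rfl | rfl | rfl) <;> decide

theorem IsPrimitiveRoot.totient_le_two_of_add_inv_eq_ratCast {K : Type*} [Field K] [CharZero K]
    {ζ : K} {n : ℕ} (hζ : IsPrimitiveRoot ζ n) (hn : 0 < n) {q : ℚ} (h : ζ + ζ⁻¹ = q) :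
    φ n ≤ 2 := by
  have hζ0 : ζ ≠ 0 := hζ.ne_zero hn.ne'
  have hroot : aeval ζ (X ^ 2 - C q * X + 1 : ℚ[X]) = 0 := by
    simp only [map_add, map_sub, map_mul, map_pow, aeval_X, aeval_C, map_one, eq_ratCast, ← h]
    field_simp
    ring
  have hmonic : (X ^ 2 - C q * X + 1 : ℚ[X]).Monic := by monicity!
  calc φ n = (minpoly ℚ ζ).natDegree := by
        rw [← cyclotomic_eq_minpoly_rat hζ hn, natDegree_cyclotomic]
    _ ≤ (X ^ 2 - C q * X + 1 : ℚ[X]).natDegree :=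
        natDegree_le_natDegree (minpoly.degree_le_of_ne_zero ℚ ζ hmonic.ne_zero hroot)
    _ ≤ 2 := by compute_degree

theorem Real.exists_rat_cos_int_mul {θ : ℝ} {q : ℚ} (h : cos θ = q) (k : ℤ) :
    ∃ q' : ℚ, cos (k * θ) = q' :=
  ⟨(Chebyshev.T ℚ k).eval q, by
    rw [← Chebyshev.T_real_cos, h, ← Chebyshev.map_T (Rat.castHom ℝ), eval_map]
    exact eval₂_hom (Rat.castHom ℝ) q⟩

theorem totient_le_two_of_cos_eq_ratCast {m : ℤ} {n : ℕ} (hn : 0 < n) (hco : IsCoprime m n)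
    {q : ℚ} (h : cos (m / n * (2 * π)) = q) : φ n ≤ 2 := by
  have hζ := Complex.isPrimitiveRoot_exp_of_isCoprime m n hn.ne' hco
  refine hζ.totient_le_two_of_add_inv_eq_ratCast hn (q := 2 * q) ?_
  rw [← Complex.exp_neg, Rat.cast_mul, Rat.cast_ofNat, ← Complex.ofReal_ratCast, ← h,
    Complex.ofReal_cos, Complex.two_cos]
  push_cast
  ring_nf

theorem exists_rat_cos_two_pi_div {n : ℕ} (hn : n ∈ ({1, 2, 3, 4, 6} : Set ℕ)) :
    ∃ q : ℚ, cos (2 * π / n) = q := by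
  rcases hn with rfl | rfl | rfl | rfl | rfl
  · exact ⟨1, by simp⟩
  · exact ⟨-1, by simp⟩
  · refine ⟨-1 / 2, ?_⟩
    rw [Nat.cast_ofNat, show 2 * π / 3 = π - π / 3 by ring, cos_pi_sub, cos_pi_div_three]
    norm_num
  · exact ⟨0, by simp [show 2 * π / 4 = π / 2 by ring]⟩
  · exact ⟨1 / 2, by simp [show 2 * π / 6 = π / 3 by ring]⟩

theorem cos_rational_angle_rational_iff_totient_le_two
    (m : ℤ) (n : ℕ) (hn : 1 ≤ n) (hco : Int.gcd m (n : ℤ) = 1)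
    (α : ℝ) (hα : α = ((m : ℝ) / (n : ℝ)) * (2 * Real.pi)) :
    ((∃ q : ℚ, Real.cos α = (q : ℝ)) ↔ Nat.totient n ≤ 2) ∧
    ((∃ q : ℚ, Real.cos α = (q : ℝ)) ↔ n ∈ ({1, 2, 3, 4, 6} : Set ℕ)) := by
  have key : (∃ q : ℚ, cos α = q) ↔ φ n ≤ 2 := by
    subst hα
    constructor
    · rintro ⟨q, hq⟩
      exact totient_le_two_of_cos_eq_ratCast hn (Int.isCoprime_iff_gcd_eq_one.2 hco) hq
    · intro h
      obtain ⟨q, hq⟩ := exists_rat_cos_two_pi_div ((Nat.totient_le_two_iff hn).1 h)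
      rw [show (m : ℝ) / n * (2 * π) = m * (2 * π / n) by ring]
      exact exists_rat_cos_int_mul hq m
  exact ⟨key, key.trans (Nat.totient_le_two_iff hn)⟩
end

section
/- Let m, n be coprime integers with n ≥ 1 and α = (m/n)·2π, and let d > 1 be an integer. Then cos α is an algebraic number of degree d over ℚ if and only if φ(n) = 2d. Equivalently, for n > 2 the field extension degree [ℚ(cos α) : ℚ] equals φ(n)/2. -/
/-!
Put `ζ = exp(iα)`, a primitive `n`-th root of unity, so `[ℚ(ζ) : ℚ] = φ(n)`. Since
`ζ + ζ⁻¹ = 2 cos α`, the field `ℚ(cos α)` lies in `ℚ(ζ)` and `ζ` is a root of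
`X² - 2 cos α · X + 1` over it. For `n > 2` the root `ζ` is not real while `ℚ(cos α)` is, so
`[ℚ(ζ) : ℚ(cos α)] = 2` and `φ(n) = 2 [ℚ(cos α) : ℚ]`. For `n ≤ 2`, `cos α = ±1` has degree `1`.
-/

open Polynomial IntermediateField Module Real

section Tower

variable {K L : Type*} [Field K] [Field L] [Algebra K L]

theorem natDegree_minpoly_eq_mul_of_mem_adjoin {z c : L} (hz : IsIntegral K z) (hc : c ∈ K⟮z⟯) :
    (minpoly K z).natDegree = (minpoly K c).natDegree * (minpoly K⟮c⟯ z).natDegree := by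
  have : FiniteDimensional K K⟮z⟯ := adjoin.finiteDimensional hz
  have hcint : IsIntegral K c := isIntegral_iff.mp (IsIntegral.of_finite K (⟨c, hc⟩ : K⟮z⟯))
  have hzc : IsIntegral K⟮c⟯ z := hz.tower_top
  have hres : (K⟮c⟯⟮z⟯).restrictScalars K = K⟮z⟯ :=
    (restrictScalars_adjoin_eq_sup K K⟮c⟯ {z}).trans
      (sup_eq_right.mpr (adjoin_simple_le_iff.mpr hc))
  rw [← adjoin.finrank hz, ← adjoin.finrank hcint, ← adjoin.finrank hzc, ← hres]
  exact (finrank_mul_finrank K K⟮c⟯ K⟮c⟯⟮z⟯).symm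

theorem natDegree_minpoly_eq_two {z : L} {p : K[X]} (hp0 : p ≠ 0) (hp : p.natDegree ≤ 2)
    (hroot : aeval z p = 0) (hz : z ∉ (algebraMap K L).range) : (minpoly K z).natDegree = 2 := by
  have hle := natDegree_le_of_dvd (minpoly.dvd K z hroot) hp0
  have hge := (minpoly.two_le_natDegree_iff (IsAlgebraic.isIntegral ⟨p, hp0, hroot⟩)).mpr hz
  omega

end Tower

theorem IsPrimitiveRoot.le_two {R : Type*} [CommRing R] [LinearOrder R] [IsStrictOrderedRing R]
    {x : R} {n : ℕ} (h : IsPrimitiveRoot x n) : n ≤ 2 := by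
  rcases Nat.eq_zero_or_pos n with rfl | hn
  · omega
  have hx : x = 1 ∨ x = -1 := by
    rcases (pow_eq_one_iff_of_ne_zero hn.ne').mp h.pow_eq_one with h1 | ⟨h1, -⟩ <;> simp [h1]
  have hsq : x ^ 2 = 1 := by rcases hx with rfl | rfl <;> norm_num
  exact Nat.le_of_dvd two_pos (h.dvd_of_pow_eq_one 2 hsq)

theorem IsPrimitiveRoot.notMem_adjoin_ofReal {ζ : ℂ} {n : ℕ} (hζ : IsPrimitiveRoot ζ n)
    (hn : 2 < n) (x : ℝ) : ζ ∉ ℚ⟮(x : ℂ)⟯ := by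
  intro hmem
  have hreal : ℚ⟮(x : ℂ)⟯ ≤ (Complex.ofRealAm.restrictScalars ℚ).fieldRange :=
    adjoin_simple_le_iff.mpr ⟨x, rfl⟩
  obtain ⟨y, rfl⟩ := hreal hmem
  have hy : IsPrimitiveRoot y n :=
    (IsPrimitiveRoot.map_iff_of_injective (f := Complex.ofRealAm.restrictScalars ℚ)
      Complex.ofReal_injective).mp hζ
  have := hy.le_two
  omega

theorem isPrimitiveRoot_exp_int_div_mul_two_pi {m : ℤ} {n : ℕ} (hn : n ≠ 0)
    (hco : Int.gcd m (n : ℤ) = 1) :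
    IsPrimitiveRoot (Complex.exp (((m / n * (2 * π) : ℝ) : ℂ) * Complex.I)) n := by
  have heq : Complex.exp (2 * π * Complex.I / n) ^ m =
      Complex.exp (((m / n * (2 * π) : ℝ) : ℂ) * Complex.I) := by
    rw [← Complex.exp_int_mul]
    push_cast
    ring_nf
  exact heq ▸ (Complex.isPrimitiveRoot_exp n hn).zpow_of_gcd_eq_one m hco

-- `n = 0` is included: there `m / n = 0`.
theorem natDegree_minpoly_cos_of_le_two (m : ℤ) {n : ℕ} (hn : n ≤ 2) :
    (minpoly ℚ (cos (m / n * (2 * π)))).natDegree = 1 := by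
  rw [minpoly.natDegree_eq_one_iff]
  interval_cases n
  · exact ⟨1, by simp⟩
  · exact ⟨1, by simp [cos_int_mul_two_pi]⟩
  · refine ⟨(-1) ^ m, ?_⟩
    rw [show (m : ℝ) / (2 : ℕ) * (2 * π) = m * π by push_cast; ring, cos_int_mul_pi]
    simp

theorem two_mul_natDegree_minpoly_cos {m : ℤ} {n : ℕ} (hn : 2 < n)
    (hco : Int.gcd m (n : ℤ) = 1) :
    2 * (minpoly ℚ (cos (m / n * (2 * π)))).natDegree = Nat.totient n := by
  set α : ℝ := m / n * (2 * π)
  set ζ : ℂ := Complex.exp (α * Complex.I)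
  set c : ℂ := (cos α : ℂ) with hc_def
  have hζ : IsPrimitiveRoot ζ n := isPrimitiveRoot_exp_int_div_mul_two_pi (by omega) hco
  have hsum : ζ + ζ⁻¹ = 2 * c := by
    rw [← Complex.exp_neg, hc_def, Complex.ofReal_cos, Complex.two_cos, neg_mul]
  have hc : c ∈ ℚ⟮ζ⟯ := by
    have hζmem : ζ ∈ ℚ⟮ζ⟯ := mem_adjoin_simple_self ℚ ζ
    rw [show c = (ζ + ζ⁻¹) / 2 by rw [hsum]; ring]
    exact div_mem (add_mem hζmem (inv_mem hζmem)) (ofNat_mem _ 2)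
  have hquad : (minpoly ℚ⟮c⟯ ζ).natDegree = 2 := by
    have hdeg : (X ^ 2 - C (2 * AdjoinSimple.gen ℚ c) * X + 1).natDegree = 2 := by
      compute_degree!
    refine natDegree_minpoly_eq_two (p := X ^ 2 - C (2 * AdjoinSimple.gen ℚ c) * X + 1)
      (ne_zero_of_natDegree_gt (hdeg ▸ two_pos)) hdeg.le ?_ ?_
    · have hζ0 : ζ ≠ 0 := hζ.ne_zero (by omega)
      simp only [map_add, map_sub, map_pow, map_mul, map_one, aeval_X, aeval_C, map_ofNat,
        AdjoinSimple.algebraMap_gen, ← hsum]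
      field_simp
      ring
    · rintro ⟨y, hy⟩
      exact hζ.notMem_adjoin_ofReal hn (cos α) (hy ▸ y.2)
  have htower := natDegree_minpoly_eq_mul_of_mem_adjoin (hζ.isIntegral (by omega)).tower_top hc
  have hmin : minpoly ℚ c = minpoly ℚ (cos α) := minpoly.algebraMap_eq Complex.ofReal_injective _
  rw [← cyclotomic_eq_minpoly_rat hζ (by omega), natDegree_cyclotomic, hquad, hmin] at htower
  omega

theorem cos_rational_angle_degree_iff_totient_general
    (m : ℤ) (n : ℕ) (hco : Int.gcd m (n : ℤ) = 1)
    (α : ℝ) (hα : α = ((m : ℝ) / (n : ℝ)) * (2 * Real.pi))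
    (d : ℕ) (hd : 1 < d) :
    ((IsAlgebraic ℚ (Real.cos α) ∧ (minpoly ℚ (Real.cos α)).natDegree = d) ↔
      Nat.totient n = 2 * d) ∧
    (2 < n → Module.finrank ℚ (IntermediateField.adjoin ℚ ({Real.cos α} : Set ℝ)) =
      Nat.totient n / 2) := by
  subst hα
  rcases le_or_gt n 2 with hn | hn
  · have hdeg := natDegree_minpoly_cos_of_le_two m hn
    have htot : Nat.totient n ≤ 1 := by interval_cases n <;> simp
    exact ⟨⟨fun h => by omega, fun h => by omega⟩, fun h => by omega⟩
  · have hdeg := two_mul_natDegree_minpoly_cos hn hco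
    have htot : 0 < Nat.totient n := Nat.totient_pos.mpr (by omega)
    have hint : IsIntegral ℚ (cos (m / n * (2 * π))) :=
      minpoly.ne_zero_iff.mp fun h => by simp [h] at hdeg; omega
    refine ⟨⟨fun h => by omega, fun h => ⟨hint.isAlgebraic, by omega⟩⟩, fun _ => ?_⟩
    rw [adjoin.finrank hint]
    omega

theorem cos_rational_angle_degree_iff_totient
    (m : ℤ) (n : ℕ) (hn : 1 ≤ n) (hco : Int.gcd m (n : ℤ) = 1)
    (α : ℝ) (hα : α = ((m : ℝ) / (n : ℝ)) * (2 * Real.pi))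
    (d : ℕ) (hd : 1 < d) :
    ((IsAlgebraic ℚ (Real.cos α) ∧ (minpoly ℚ (Real.cos α)).natDegree = d) ↔
      Nat.totient n = 2 * d) ∧
    (2 < n → Module.finrank ℚ (IntermediateField.adjoin ℚ ({Real.cos α} : Set ℝ)) =
      Nat.totient n / 2) :=
  cos_rational_angle_degree_iff_totient_general m n hco α hα d hd
end
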